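/- arXiv:2512.19462 — 3 statements merged into one kernel-verified Lean document; each statement's English description precedes it below -/
import Mathlib

section
/- For all n ≥ 1 and k ≥ 0, the number of 132-avoiding permutations of length n with exactly k short values satisfies |A(n,k)| = Σ_{m=0}^{n−1} C_m · |A(n−1−m, k−m)|, where C_m is the m-th Catalan number (C_0 = 1), |A(0,j)| is 1 if j = 0 and 0 otherwise, and |A(a,b)| = 0 when b < 0. (This is the recurrence obtained by splitting a 132-avoiding permutation at its maximum entry: all m entries to the left of the maximum are short values, and the part to the right contributes the remaining k−m short values.) -/
open List

attribute [local instance] Classical.propDecidable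

/-- `l` is a permutation of length `n`, i.e. a list containing each of `1,…,n` exactly once. -/
def IsPermList (n : ℕ) (l : List ℕ) : Prop :=
  l.Perm (List.range' 1 n)

/-- Two sequences (with distinct entries) are order-isomorphic: same length and the same
pairwise order relations. -/
def OrderIsoList (a b : List ℕ) : Prop :=
  a.length = b.length ∧
    ∀ i j, i < j → j < a.length →
      (a.getD i 0 < a.getD j 0 ↔ b.getD i 0 < b.getD j 0)

/-- `l` contains the pattern `p`: some subsequence of `l` is order-isomorphic to `p`. -/
def ContainsPat (l p : List ℕ) : Prop :=
  ∃ s, s.Sublist l ∧ OrderIsoList s p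

/-- `l` avoids the pattern `p`. -/
def AvoidsPat (l p : List ℕ) : Prop := ¬ ContainsPat l p

/-- Relabel the entries of a list of distinct naturals order-isomorphically with `1,…,m`. -/
def standardize (l : List ℕ) : List ℕ :=
  l.map fun x => (l.filter fun y => y ≤ x).length

/-- Insert the new maximum value `l.length + 1` immediately after the first `i` entries. -/
def insertMax (l : List ℕ) (i : ℕ) : List ℕ :=
  l.take i ++ (l.length + 1) :: l.drop i

/-- The insertion step at position `i` for the pattern `p`: insert a new maximum after the
first `i` entries, keep the longest prefix avoiding `p` (i.e. remove the minimal suffix so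
that the result avoids `p`), then standardize. -/
noncomputable def insStep (p l : List ℕ) (i : ℕ) : List ℕ :=
  standardize ((insertMax l i).take
    (Nat.findGreatest (fun k => AvoidsPat ((insertMax l i).take k) p)
      (insertMax l i).length))

/-- The entry at (0-indexed) position `i` of `l` is a right-to-left maximum: it is larger
than every entry to its right. -/
def IsRLMax (l : List ℕ) (i : ℕ) : Prop :=
  ∀ j, i < j → j < l.length → l.getD j 0 < l.getD i 0

/-- The number of short values of `l`: entries that are not right-to-left maxima. -/
noncomputable def shortCount (l : List ℕ) : ℕ :=
  {i | i < l.length ∧ ¬ IsRLMax l i}.ncard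

/-- `A132 n k` is the set of `132`-avoiding permutations of length `n` with exactly `k`
short values. -/
def A132 (n k : ℕ) : Set (List ℕ) :=
  {l | IsPermList n l ∧ AvoidsPat l [1, 3, 2] ∧ shortCount l = k}

/-!
Write a 132-avoiding permutation of `1, …, n` as `L ++ n :: R`. Since `n` sits between them,
every entry of `L` exceeds every entry of `R`, so `L` and `R` are 132-avoiding permutations of
the top `m = |L|` and the bottom `n - 1 - m` values; conversely every such pair glues back to a
132-avoider. All entries of `L` are short, `n` is not, and `R` keeps its short values, so
`L ++ n :: R` has `m + shortCount R` short values. Ignoring short values, the same splitting gives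
the Catalan recurrence, so there are `C_m` choices for `L`.
-/

def Av132 (a m : ℕ) : Set (List ℕ) :=
  {l | l.Perm (List.range' a m) ∧ AvoidsPat l [1, 3, 2]}

lemma AvoidsPat.sublist {s l p : List ℕ} (hl : AvoidsPat l p) (h : s <+ l) : AvoidsPat s p :=
  fun ⟨t, ht, hiso⟩ => hl ⟨t, ht.trans h, hiso⟩

lemma orderIsoList_map {f : ℕ → ℕ} (hf : StrictMono f) (s p : List ℕ) :
    OrderIsoList (s.map f) p ↔ OrderIsoList s p := by
  simp only [OrderIsoList, length_map]
  have hget : ∀ k < s.length, (s.map f).getD k 0 = f (s.getD k 0) := fun k hk => by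
    rw [getD_eq_getElem _ _ (by simpa using hk), getD_eq_getElem _ _ hk, getElem_map]
  refine and_congr_right fun _ => forall₄_congr fun i j hij hj => ?_
  rw [hget i (hij.trans hj), hget j hj, hf.lt_iff_lt]

lemma containsPat_map {f : ℕ → ℕ} (hf : StrictMono f) (l p : List ℕ) :
    ContainsPat (l.map f) p ↔ ContainsPat l p := by
  simp only [ContainsPat, sublist_map_iff]
  constructor
  · rintro ⟨_, ⟨s, hs, rfl⟩, hiso⟩
    exact ⟨s, hs, (orderIsoList_map hf s p).mp hiso⟩
  · rintro ⟨s, hs, hiso⟩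
    exact ⟨s.map f, ⟨s, hs, rfl⟩, (orderIsoList_map hf s p).mpr hiso⟩

lemma containsPat_132_iff (l : List ℕ) :
    ContainsPat l [1, 3, 2] ↔ ∃ x y z : ℕ, [x, y, z] <+ l ∧ x < z ∧ z ≤ y := by
  constructor
  · rintro ⟨s, hs, hlen, hiso⟩
    obtain ⟨x, y, z, rfl⟩ := List.length_eq_three.mp (by simpa using hlen)
    have hxz := hiso 0 2 (by norm_num) (by simp)
    have hyz := hiso 1 2 (by norm_num) (by simp)
    simp only [getD_cons_zero, getD_cons_succ] at hxz hyz
    exact ⟨x, y, z, hs, by simpa using hxz, by simpa using hyz⟩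
  · rintro ⟨x, y, z, hs, hxz, hzy⟩
    refine ⟨[x, y, z], hs, rfl, fun i j hij hj => ?_⟩
    simp only [length_cons, length_nil] at hj
    interval_cases j <;> interval_cases i <;> simp <;> omega

lemma triple_sublist_append_cases {α : Type*} {x y z : α} {A B : List α}
    (h : [x, y, z] <+ A ++ B) :
    [x, y, z] <+ A ∨ (x ∈ A ∧ [y, z] <+ B) ∨ ([x, y] <+ A ∧ z ∈ B) ∨ [x, y, z] <+ B := by
  obtain ⟨s₁, s₂, heq, h₁, h₂⟩ := sublist_append_iff.mp h
  rcases s₁ with _ | ⟨a, _ | ⟨b, _ | ⟨c, _ | ⟨d, s⟩⟩⟩⟩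
  all_goals simp only [nil_append, cons_append, cons.injEq] at heq
  · exact .inr <| .inr <| .inr <| heq ▸ h₂
  · obtain ⟨rfl, rfl⟩ := heq
    exact .inr <| .inl ⟨singleton_sublist.mp h₁, h₂⟩
  · obtain ⟨rfl, rfl, rfl⟩ := heq
    exact .inr <| .inr <| .inl ⟨h₁, singleton_sublist.mp h₂⟩
  · obtain ⟨rfl, rfl, rfl, -⟩ := heq
    exact .inl h₁
  · simp at heq

lemma avoidsPat_132_append_cons_iff {L R : List ℕ} {c : ℕ} (hL : ∀ x ∈ L, x < c)
    (hR : ∀ y ∈ R, y < c) (hLR : ∀ x ∈ L, ∀ y ∈ R, x ≠ y) :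
    AvoidsPat (L ++ c :: R) [1, 3, 2] ↔
      AvoidsPat L [1, 3, 2] ∧ AvoidsPat R [1, 3, 2] ∧ ∀ x ∈ L, ∀ y ∈ R, y < x := by
  constructor
  · intro h
    refine ⟨h.sublist (sublist_append_left _ _),
      h.sublist ((sublist_cons_self _ _).trans (sublist_append_right _ _)), fun x hx y hy => ?_⟩
    by_contra hxy
    -- otherwise `x, c, y` is an occurrence of `132`
    refine h ((containsPat_132_iff _).mpr ⟨x, c, y, ?_, by grind, (hR y hy).le⟩)
    exact (singleton_sublist.mpr hx).append ((singleton_sublist.mpr hy).cons_cons c)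
  · rintro ⟨hLa, hRa, hlt⟩ hcont
    obtain ⟨x, y, z, hs, hxz, hzy⟩ := (containsPat_132_iff _).mp hcont
    rcases triple_sublist_append_cases hs with hs | ⟨hx, hyz⟩ | ⟨hxy, hz⟩ | hs
    · exact hLa ((containsPat_132_iff _).mpr ⟨x, y, z, hs, hxz, hzy⟩)
    · have hz : z ∈ R := by
        rcases sublist_cons_iff.mp hyz with hyz | ⟨r, hr, hr'⟩
        · exact hyz.subset (by simp)
        · obtain ⟨-, rfl⟩ := cons.inj hr
          exact hr'.subset (by simp)
      exact absurd (hlt x hx z hz) (by omega)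
    · have hy := hL y (hxy.subset (by simp))
      rcases mem_cons.mp hz with rfl | hz
      · omega
      · exact absurd (hlt x (hxy.subset (by simp)) z hz) (by omega)
    · rcases sublist_cons_iff.mp hs with hs | ⟨r, hr, hr'⟩
      · exact hRa ((containsPat_132_iff _).mpr ⟨x, y, z, hs, hxz, hzy⟩)
      · obtain ⟨rfl, rfl⟩ := cons.inj hr
        exact absurd (hR z (hr'.subset (by simp))) (by omega)

lemma finite_setOf_perm (r : List ℕ) : {l : List ℕ | l ~ r}.Finite :=
  r.permutations.toFinset.finite_toSet.subset fun l hl => by simpa using hl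

lemma length_le_of_subset_range' {l : List ℕ} {s k : ℕ} (hnd : l.Nodup) (h : l ⊆ range' s k) :
    l.length ≤ k := by
  simpa using (subperm_of_subset hnd h).length_le

lemma perm_range'_of_subset {l : List ℕ} {s : ℕ} (hnd : l.Nodup) (h : l ⊆ range' s l.length) :
    l ~ range' s l.length :=
  (subperm_of_subset hnd h).perm_of_length_le (by simp)

lemma perm_range'_of_append_perm {L R : List ℕ} {N : ℕ} (h : L ++ R ~ range' 1 N)
    (hlt : ∀ x ∈ L, ∀ y ∈ R, y < x) :
    L ~ range' (R.length + 1) L.length ∧ R ~ range' 1 R.length := by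
  have hnd : (L ++ R).Nodup := h.nodup_iff.mpr nodup_range'
  have hN : L.length + R.length = N := by simpa using h.length_eq
  have hmem : ∀ z ∈ L ++ R, 1 ≤ z ∧ z ≤ N := fun z hz => by
    have := mem_range'_1.mp (h.subset hz); omega
  constructor
  · refine perm_range'_of_subset hnd.of_append_left fun x hx => mem_range'_1.mpr ?_
    have hx' := hmem x (mem_append_left _ hx)
    have : R.length ≤ x - 1 :=
      length_le_of_subset_range' (s := 1) hnd.of_append_right fun y hy => by
        have := hmem y (mem_append_right _ hy); have := hlt x hx y hy
        exact mem_range'_1.mpr (by omega)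
    omega
  · refine perm_range'_of_subset hnd.of_append_right fun y hy => mem_range'_1.mpr ?_
    have hy' := hmem y (mem_append_right _ hy)
    have : L.length ≤ N - y :=
      length_le_of_subset_range' (s := y + 1) hnd.of_append_left fun x hx => by
        have := hmem x (mem_append_left _ hx); have := hlt x hx y hy
        exact mem_range'_1.mpr (by omega)
    omega

lemma append_cons_perm_range' {L R : List ℕ} {m j : ℕ} (hL : L ~ range' (j + 1) m)
    (hR : R ~ range' 1 j) : L ++ (m + j + 1) :: R ~ range' 1 (m + j + 1) := by
  have hLR : L ++ R ~ range' 1 (j + m) := by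
    rw [← show range' 1 j ++ range' (1 + 1 * j) m = range' 1 (j + m) from range'_append,
      show 1 + 1 * j = j + 1 by omega]
    exact perm_append_comm.trans (hR.append hL)
  calc L ++ (m + j + 1) :: R ~ (m + j + 1) :: (L ++ R) := perm_middle
    _ ~ range' 1 (j + m) ++ [m + j + 1] := (hLR.cons _).trans (perm_append_singleton _ _).symm
    _ = range' 1 (m + j + 1) := by
      rw [show m + j + 1 = j + m + 1 by omega, range'_concat, one_mul, add_comm 1]

lemma shortCount_eq_sum (l : List ℕ) :
    shortCount l = ∑ i ∈ Finset.range l.length, if IsRLMax l i then 0 else 1 := by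
  have hset : {i | i < l.length ∧ ¬IsRLMax l i} =
      ↑((Finset.range l.length).filter fun i => ¬IsRLMax l i) := by
    ext; simp
  rw [shortCount, hset, Set.ncard_coe_finset, Finset.card_filter]
  simp only [ite_not]

lemma isRLMax_cons_succ (a : ℕ) (l : List ℕ) (i : ℕ) :
    IsRLMax (a :: l) (i + 1) ↔ IsRLMax l i := by
  simp only [IsRLMax, length_cons, getD_cons_succ]
  constructor
  · intro h j hij hj
    simpa using h (j + 1) (by omega) (by omega)
  · intro h j hij hj
    obtain ⟨j, rfl⟩ : ∃ j', j = j' + 1 := ⟨j - 1, by omega⟩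
    simpa using h j (by omega) (by omega)

lemma isRLMax_cons_zero (a : ℕ) (l : List ℕ) : IsRLMax (a :: l) 0 ↔ ∀ x ∈ l, x < a := by
  simp only [IsRLMax, length_cons, getD_cons_zero, forall_mem_iff_getElem]
  constructor
  · intro h j hj
    have := h (j + 1) (by omega) (by omega)
    rwa [getD_cons_succ, getD_eq_getElem _ _ hj] at this
  · intro h j hj hjl
    obtain ⟨j, rfl⟩ : ∃ j', j = j' + 1 := ⟨j - 1, by omega⟩
    rw [getD_cons_succ, getD_eq_getElem _ _ (by omega)]
    exact h j (by omega)

lemma shortCount_cons (a : ℕ) (l : List ℕ) :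
    shortCount (a :: l) = shortCount l + if ∀ x ∈ l, x < a then 0 else 1 := by
  simp only [shortCount_eq_sum, length_cons, Finset.sum_range_succ', isRLMax_cons_succ,
    isRLMax_cons_zero]

lemma shortCount_append_cons {L R : List ℕ} {c : ℕ} (hL : ∀ x ∈ L, x < c)
    (hR : ∀ y ∈ R, y < c) : shortCount (L ++ c :: R) = L.length + shortCount R := by
  induction L with
  | nil => simpa [shortCount_cons] using hR
  | cons x L ih =>
    have hx : ¬ ∀ y ∈ L ++ c :: R, y < x := fun h => by
      have := h c (by simp); have := hL x (by simp); omega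
    rw [cons_append, shortCount_cons, if_neg hx, ih fun y hy => hL y (by simp [hy]), length_cons]
    ring

lemma idxOf_append_cons_of_notMem {L R : List ℕ} {c : ℕ} (hc : c ∉ L) :
    (L ++ c :: R).idxOf c = L.length := by
  rw [idxOf_append_of_notMem hc, idxOf_cons_self, add_zero]

lemma injOn_append_cons (c : ℕ) :
    Set.InjOn (fun p : List ℕ × List ℕ => p.1 ++ c :: p.2) {p | c ∉ p.1} := by
  rintro ⟨L₁, R₁⟩ h₁ ⟨L₂, R₂⟩ h₂ heq
  have hlen : L₁.length = L₂.length := by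
    rw [← idxOf_append_cons_of_notMem (R := R₁) h₁, ← idxOf_append_cons_of_notMem (R := R₂) h₂]
    exact congrArg _ heq
  obtain ⟨hL, h⟩ := append_inj heq hlen
  exact Prod.ext hL (cons.inj h).2

lemma image_append_cons_av132 (m j : ℕ) :
    (fun p : List ℕ × List ℕ => p.1 ++ (m + j + 1) :: p.2) '' (Av132 (j + 1) m ×ˢ Av132 1 j) =
      {l ∈ Av132 1 (m + j + 1) | l.idxOf (m + j + 1) = m} := by
  ext l
  constructor
  · rintro ⟨⟨L, R⟩, ⟨⟨hLp, hLa⟩, ⟨hRp, hRa⟩⟩, rfl⟩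
    have hL : ∀ x ∈ L, j + 1 ≤ x ∧ x < m + j + 1 := fun x hx => by
      have := mem_range'_1.mp (hLp.subset hx); omega
    have hR : ∀ y ∈ R, y < j + 1 := fun y hy => by
      have := mem_range'_1.mp (hRp.subset hy); omega
    have hsplit := avoidsPat_132_append_cons_iff (fun x hx => (hL x hx).2)
      (fun y hy => by have := hR y hy; omega)
      (fun x hx y hy => by have := hL x hx; have := hR y hy; omega)
    refine ⟨⟨append_cons_perm_range' hLp hRp, hsplit.mpr ⟨hLa, hRa, fun x hx y hy => ?_⟩⟩, ?_⟩
    · have := hL x hx; have := hR y hy; omega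
    · rw [idxOf_append_cons_of_notMem fun h => (hL _ h).2.false, hLp.length_eq, length_range']
  · rintro ⟨⟨hp, ha⟩, hidx⟩
    have hmem : m + j + 1 ∈ l := hp.mem_iff.mpr (mem_range'_1.mpr ⟨by omega, by omega⟩)
    obtain ⟨L, R, rfl⟩ := append_of_mem hmem
    have hLR : L ++ R ~ range' 1 (m + j) := by
      refine (perm_cons (m + j + 1)).mp (perm_middle.symm.trans (hp.trans ?_))
      rw [range'_concat, show 1 + 1 * (m + j) = m + j + 1 by omega]
      exact perm_append_singleton _ _
    have hlt : ∀ x ∈ L ++ R, x < m + j + 1 := fun x hx => by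
      have := mem_range'_1.mp (hLR.subset hx); omega
    have hcL : m + j + 1 ∉ L := fun h => (hlt _ (mem_append_left _ h)).false
    have hnd : (L ++ R).Nodup := hLR.nodup_iff.mpr nodup_range'
    obtain ⟨hLa, hRa, hgt⟩ := (avoidsPat_132_append_cons_iff
      (fun x hx => hlt x (mem_append_left _ hx)) (fun y hy => hlt y (mem_append_right _ hy))
      (fun x hx y hy h => disjoint_of_nodup_append hnd hx (h ▸ hy))).mp ha
    have hm : L.length = m := by rwa [idxOf_append_cons_of_notMem hcL] at hidx
    have hj : R.length = j := by
      have := hLR.length_eq; simp only [length_append, length_range'] at this; omega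
    obtain ⟨hLp, hRp⟩ := perm_range'_of_append_perm hLR hgt
    rw [hm, hj] at hLp
    rw [hj] at hRp
    exact ⟨(L, R), ⟨⟨hLp, hLa⟩, ⟨hRp, hRa⟩⟩, rfl⟩

lemma ncard_av132_add (d a m : ℕ) : (Av132 (d + a) m).ncard = (Av132 a m).ncard := by
  have hinj : Function.Injective (map (d + ·)) := map_injective_iff.mpr (add_right_injective d)
  have hmono : StrictMono (d + ·) := fun _ _ h => Nat.add_lt_add_left h d
  have hpre : map (d + ·) ⁻¹' Av132 (d + a) m = Av132 a m := by
    ext l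
    simp only [Av132, Set.mem_preimage, Set.mem_ofPred_eq, AvoidsPat,
      containsPat_map hmono, ← map_add_range', map_perm_map_iff (add_right_injective d)]
  have hrange : Av132 (d + a) m ⊆ Set.range (map (d + ·)) := by
    rintro l ⟨hp, -⟩
    refine ⟨l.map (· - d), (map_map ..).trans ((map_congr_left fun x hx => ?_).trans (map_id l))⟩
    have := mem_range'_1.mp (hp.subset hx)
    simp only [Function.comp_apply, id]
    omega
  rw [← hpre, Set.ncard_preimage_of_injective_subset_range hinj hrange]

lemma Set.ncard_eq_sum_ncard_fiber {α β : Type*} {s : Set α} (hs : s.Finite) {f : α → β}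
    {t : Finset β} (h : Set.MapsTo f s t) : s.ncard = ∑ b ∈ t, {a ∈ s | f a = b}.ncard := by
  classical
  rw [← hs.coe_toFinset, Set.ncard_coe_finset,
    Finset.card_eq_sum_card_fiberwise (by simpa using h)]
  refine Finset.sum_congr rfl fun b _ => ?_
  rw [← Set.ncard_coe_finset, Finset.coe_filter]
  rfl

lemma ncard_av132_inter (N : ℕ) (u : Set (List ℕ)) :
    (Av132 1 (N + 1) ∩ u).ncard = ∑ m ∈ Finset.range (N + 1),
      ((Av132 (N - m + 1) m ×ˢ Av132 1 (N - m)) ∩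
        (fun p : List ℕ × List ℕ => p.1 ++ (N + 1) :: p.2) ⁻¹' u).ncard := by
  have hfin : (Av132 1 (N + 1) ∩ u).Finite := (finite_setOf_perm _).subset fun l hl => hl.1.1
  have hmaps : Set.MapsTo (fun l => l.idxOf (N + 1)) (Av132 1 (N + 1) ∩ u)
      (Finset.range (N + 1)) := fun l ⟨⟨hp, _⟩, _⟩ => by
    have hmem : N + 1 ∈ l := hp.mem_iff.mpr (mem_range'_1.mpr ⟨by omega, by omega⟩)
    simpa [hp.length_eq] using idxOf_lt_length_iff.mpr hmem
  rw [Set.ncard_eq_sum_ncard_fiber hfin hmaps]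
  refine Finset.sum_congr rfl fun m hm => ?_
  obtain ⟨j, rfl⟩ : ∃ j, N = m + j := ⟨N - m, by have := Finset.mem_range.mp hm; omega⟩
  have hinj : Set.InjOn (fun p : List ℕ × List ℕ => p.1 ++ (m + j + 1) :: p.2)
      (Av132 (j + 1) m ×ˢ Av132 1 j) := (injOn_append_cons _).mono fun p hp =>
    show m + j + 1 ∉ p.1 from fun h => by have := mem_range'_1.mp (hp.1.1.subset h); omega
  rw [Nat.add_sub_cancel_left, ← (hinj.mono Set.inter_subset_left).ncard_image,
    Set.image_inter_preimage, image_append_cons_av132]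
  congr 1
  ext l
  simp only [Set.mem_inter_iff, Set.mem_ofPred_eq]
  tauto

lemma ncard_av132_one (n : ℕ) : (Av132 1 n).ncard = catalan n := by
  induction n using Nat.strong_induction_on with
  | _ n ih =>
    cases n with
    | zero =>
      have h : Av132 1 0 = {[]} := by
        ext l
        simp only [Av132, range'_zero, perm_nil, Set.mem_ofPred_eq, Set.mem_singleton_iff,
          and_iff_left_iff_imp]
        rintro rfl ⟨s, hs, hlen, -⟩
        simp [sublist_nil.mp hs] at hlen
      rw [h, Set.ncard_singleton, catalan_zero]
    | succ N =>
      have h := ncard_av132_inter N Set.univ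
      simp only [Set.inter_univ, Set.preimage_univ, Set.ncard_prod, ncard_av132_add] at h
      rw [h, catalan_succ, Fin.sum_univ_eq_sum_range (fun m => catalan m * catalan (N - m))]
      refine Finset.sum_congr rfl fun m hm => ?_
      have := Finset.mem_range.mp hm
      rw [ih m (by omega), ih (N - m) (by omega)]

lemma ncard_av132 (a n : ℕ) : (Av132 a n).ncard = catalan n := by
  rw [← ncard_av132_one, ← add_zero a, ncard_av132_add, ← ncard_av132_add 1 0]

lemma A132_eq_inter (n k : ℕ) : A132 n k = Av132 1 n ∩ {l | shortCount l = k} := by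
  ext l
  simp [A132, Av132, IsPermList, and_assoc]

lemma prod_inter_preimage_shortCount (m j k : ℕ) :
    (Av132 (j + 1) m ×ˢ Av132 1 j) ∩
        (fun p : List ℕ × List ℕ => p.1 ++ (m + j + 1) :: p.2) ⁻¹' {l | shortCount l = k} =
      Av132 (j + 1) m ×ˢ {R ∈ Av132 1 j | m + shortCount R = k} := by
  have hsc : ∀ L ∈ Av132 (j + 1) m, ∀ R ∈ Av132 1 j,
      shortCount (L ++ (m + j + 1) :: R) = m + shortCount R := fun L hL R hR => by
    rw [shortCount_append_cons (fun x hx => ?_) (fun y hy => ?_), hL.1.length_eq, length_range']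
    · have := mem_range'_1.mp (hL.1.subset hx); omega
    · have := mem_range'_1.mp (hR.1.subset hy); omega
  ext ⟨L, R⟩
  simp only [Set.mem_inter_iff, Set.mem_prod, Set.mem_preimage, Set.mem_ofPred_eq]
  constructor
  · rintro ⟨⟨hL, hR⟩, hk⟩
    exact ⟨hL, hR, hsc L hL R hR ▸ hk⟩
  · rintro ⟨hL, hR, hk⟩
    exact ⟨⟨hL, hR⟩, hsc L hL R hR ▸ hk⟩

/-- Recurrence for `|A(n,k)|` obtained by splitting a 132-avoiding permutation at its
maximum entry: `|A(n,k)| = Σ_{m=0}^{n-1} C_m * |A(n-1-m, k-m)|`, where terms with `m > k`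
vanish (the convention `|A(a,b)| = 0` for `b < 0`). -/
theorem card_A132_rec (n k : ℕ) (hn : 1 ≤ n) :
    (A132 n k).ncard =
      ∑ m ∈ Finset.range n,
        if m ≤ k then catalan m * (A132 (n - 1 - m) (k - m)).ncard else 0 := by
  obtain ⟨N, rfl⟩ : ∃ N, n = N + 1 := ⟨n - 1, by omega⟩
  rw [A132_eq_inter, ncard_av132_inter]
  refine Finset.sum_congr rfl fun m hm => ?_
  obtain ⟨j, rfl⟩ : ∃ j, N = m + j := ⟨N - m, by have := Finset.mem_range.mp hm; omega⟩
  simp only [Nat.add_sub_cancel, Nat.add_sub_cancel_left]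
  rw [prod_inter_preimage_shortCount, Set.ncard_prod, ncard_av132]
  split_ifs with hmk
  · congr 2
    ext R
    simp only [A132_eq_inter, Set.mem_inter_iff, Set.mem_ofPred_eq]
    exact and_congr_right fun _ => by omega
  · have hempty : {R ∈ Av132 1 j | m + shortCount R = k} = ∅ :=
      Set.eq_empty_of_forall_notMem fun R hR => hmk (hR.2 ▸ Nat.le_add_right _ _)
    rw [hempty, Set.ncard_empty, mul_zero]
end

section
/- Let π be a 132-avoiding permutation of length n with exactly r short values, so that π has n−r right-to-left maxima, occurring at positions p_1 < p_2 < … < p_{n−r}. Then inserting the value n+1 at the front of π yields a 132-avoiding permutation of length n+1 with exactly r short values, and for each 1 ≤ j ≤ n−r, inserting the value n+1 immediately after position p_j yields a 132-avoiding permutation of length n+1 with exactly r+j short values. Consequently, for every s with r ≤ s ≤ n there is exactly one position i ∈ {0,…,n} such that inserting the new maximum at position i produces (with no removal) an element of A(n+1, s), and no insertion produces an element of A(n+1, s) with s < r or s > n. -/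
open List

attribute [local instance] Classical.propDecidable

/-!
A new maximum can only play the role of the `3` in a `132`, so inserting it after the first
`k + 1` entries of a `132`-avoider creates a `132` iff some of those entries is smaller than a
later one, i.e. iff `l[k]` is not a right-to-left maximum. Inserting the maximum turns
every entry before it into a short value and leaves the status of the others unchanged, so
inserting it right after the `j`-th right-to-left maximum adds exactly `j` short values.
-/

lemma containsPat_132_iff_s5 {l : List ℕ} :
    ContainsPat l [1, 3, 2] ↔ ∃ a b c, [a, b, c].Sublist l ∧ a < c ∧ c ≤ b := by
  constructor
  · rintro ⟨s, hs, hlen, hord⟩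
    obtain ⟨a, b, c, rfl⟩ := List.length_eq_three.mp (by simpa using hlen)
    have hab := hord 0 2 (by omega) (by simp)
    have hbc := hord 1 2 (by omega) (by simp)
    simp only [List.getD_cons_zero, List.getD_cons_succ] at hab hbc
    exact ⟨a, b, c, hs, by simpa using hab, by simpa using hbc⟩
  · rintro ⟨a, b, c, hs, hac, hcb⟩
    refine ⟨[a, b, c], hs, rfl, fun i j hij hj => ?_⟩
    simp only [List.length] at hj
    interval_cases j <;> interval_cases i <;> simp <;> omega

lemma containsPat_132_append_cons_iff {A B : List ℕ} {M : ℕ} (hA : ∀ x ∈ A, x < M)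
    (hB : ∀ x ∈ B, x < M) :
    ContainsPat (A ++ M :: B) [1, 3, 2] ↔
      ContainsPat (A ++ B) [1, 3, 2] ∨ ∃ a ∈ A, ∃ c ∈ B, a < c := by
  simp only [containsPat_132_iff_s5]
  constructor
  · rintro ⟨a, b, c, hs, hac, hcb⟩
    obtain ⟨l₁, l₂, heq, hl₁, hl₂⟩ := List.sublist_append_iff.mp hs
    rcases List.sublist_cons_iff.mp hl₂ with hl₂ | ⟨t, rfl, ht⟩
    · exact Or.inl ⟨a, b, c, heq ▸ hl₁.append hl₂, hac, hcb⟩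
    rcases l₁ with _ | ⟨x, _ | ⟨y, _ | ⟨z, l₁⟩⟩⟩
    · obtain ⟨rfl, rfl⟩ := List.cons.inj heq
      have := hB b (ht.subset (by simp))
      omega
    · simp only [List.cons_append, List.nil_append, List.cons.injEq] at heq
      obtain ⟨rfl, rfl, rfl⟩ := heq
      exact Or.inr ⟨a, hl₁.subset (by simp), c, ht.subset (by simp), hac⟩
    · simp only [List.cons_append, List.nil_append, List.cons.injEq] at heq
      obtain ⟨rfl, rfl, rfl, -⟩ := heq
      have := hA b (hl₁.subset (by simp))
      omega
    · simp at heq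
  · rintro (⟨a, b, c, hs, hac, hcb⟩ | ⟨a, ha, c, hc, hac⟩)
    · exact ⟨a, b, c, hs.trans ((List.sublist_cons_self M B).append_left A), hac, hcb⟩
    · refine ⟨a, M, c, ?_, hac, (hB c hc).le⟩
      exact (List.singleton_sublist.mpr ha).append ((List.singleton_sublist.mpr hc).cons_cons M)

lemma eq_take_append_getElem_cons_drop {l : List ℕ} {k : ℕ} (hk : k < l.length) :
    l = l.take k ++ l[k] :: l.drop (k + 1) := by
  rw [← List.drop_eq_getElem_cons hk, List.take_append_drop]

lemma isRLMax_iff_forall_mem_drop {l : List ℕ} {k : ℕ} (hk : k < l.length) :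
    IsRLMax l k ↔ ∀ c ∈ l.drop (k + 1), c < l[k] := by
  simp only [IsRLMax, List.mem_iff_getElem, List.getElem_drop, List.length_drop,
    List.getD_eq_getElem?_getD]
  constructor
  · rintro h c ⟨m, hm, rfl⟩
    simpa [List.getElem?_eq_getElem (by omega : k + 1 + m < l.length), hk] using
      h (k + 1 + m) (by omega) (by omega)
  · intro h j hkj hj
    have := h l[j] ⟨j - (k + 1), by omega, by congr 1; omega⟩
    simpa [hj, hk] using this

section insertMax

variable {l : List ℕ}

lemma avoidsPat_132_insertMax_zero (hle : ∀ x ∈ l, x ≤ l.length)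
    (ha : AvoidsPat l [1, 3, 2]) : AvoidsPat (insertMax l 0) [1, 3, 2] := by
  rw [AvoidsPat, insertMax, containsPat_132_append_cons_iff (by simp)
    (fun x hx => Nat.lt_succ_of_le (hle x (List.mem_of_mem_drop hx)))]
  simpa [AvoidsPat] using ha

lemma avoidsPat_132_insertMax_succ_iff (hnd : l.Nodup) (hle : ∀ x ∈ l, x ≤ l.length)
    (ha : AvoidsPat l [1, 3, 2]) {k : ℕ} (hk : k < l.length) :
    AvoidsPat (insertMax l (k + 1)) [1, 3, 2] ↔ IsRLMax l k := by
  have hsplit := eq_take_append_getElem_cons_drop hk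
  rw [AvoidsPat, insertMax, containsPat_132_append_cons_iff
    (fun x hx => Nat.lt_succ_of_le (hle x (List.mem_of_mem_take hx)))
    (fun x hx => Nat.lt_succ_of_le (hle x (List.mem_of_mem_drop hx))),
    List.take_append_drop, isRLMax_iff_forall_mem_drop hk, List.take_add_one,
    List.getElem?_eq_getElem hk]
  simp only [iff_false_intro ha, false_or, not_exists, not_and, not_lt, Option.toList_some,
    List.mem_append, List.mem_singleton]
  constructor
  · intro h c hc
    have hne : c ≠ l[k] := by
      rintro rfl
      rw [hsplit, List.nodup_append, List.nodup_cons] at hnd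
      exact hnd.2.1.1 hc
    exact lt_of_le_of_ne (h _ (Or.inr rfl) c hc) hne
  · rintro h a (ha' | rfl) c hc
    · by_contra hac
      have hsub : [a, l[k], c].Sublist (l.take k ++ l[k] :: l.drop (k + 1)) :=
        (List.singleton_sublist.mpr ha').append ((List.singleton_sublist.mpr hc).cons_cons _)
      rw [← hsplit] at hsub
      exact ha (containsPat_132_iff_s5.mpr ⟨a, l[k], c, hsub, by omega, (h c hc).le⟩)
    · exact (h c hc).le

end insertMax

section rightToLeftMaxima

variable {l : List ℕ} {i k : ℕ}

lemma getD_le_of_forall_le {M : ℕ} (hle : ∀ x ∈ l, x ≤ M) (k : ℕ) : l.getD k 0 ≤ M := by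
  rw [List.getD_eq_getElem?_getD]
  cases h : l[k]? with
  | none => simp
  | some x => exact hle x (List.mem_of_getElem? h)

lemma length_insertMax (hi : i ≤ l.length) : (insertMax l i).length = l.length + 1 := by
  simp [insertMax]; omega

lemma getD_insertMax_self (hi : i ≤ l.length) : (insertMax l i).getD i 0 = l.length + 1 := by
  simp [insertMax, List.getD_eq_getElem?_getD, hi]

lemma getD_insertMax_of_lt (hi : i ≤ l.length) (hk : k < i) :
    (insertMax l i).getD k 0 = l.getD k 0 := by
  simp [insertMax, List.getD_eq_getElem?_getD, List.getElem?_append, hk, hk.trans_le hi]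

lemma getD_insertMax_of_gt (hi : i ≤ l.length) (hk : i < k) :
    (insertMax l i).getD k 0 = l.getD (k - 1) 0 := by
  obtain ⟨m, rfl⟩ := Nat.exists_eq_add_of_lt hk
  have hidx : i + m + 1 - i = m + 1 := by omega
  have hnlt : ¬ i + m + 1 < i := by omega
  simp [insertMax, List.getD_eq_getElem?_getD, List.getElem?_append, hi, hidx, hnlt]

lemma not_isRLMax_insertMax_of_lt (hle : ∀ x ∈ l, x ≤ l.length) (hi : i ≤ l.length)
    (hk : k < i) : ¬ IsRLMax (insertMax l i) k := by
  intro hR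
  have h := hR i hk (by rw [length_insertMax hi]; omega)
  rw [getD_insertMax_self hi, getD_insertMax_of_lt hi hk] at h
  exact absurd (getD_le_of_forall_le hle k) (by omega)

lemma isRLMax_insertMax_self (hle : ∀ x ∈ l, x ≤ l.length) (hi : i ≤ l.length) :
    IsRLMax (insertMax l i) i := by
  intro j hij _
  rw [getD_insertMax_self hi, getD_insertMax_of_gt hi hij]
  exact Nat.lt_succ_of_le (getD_le_of_forall_le hle _)

lemma isRLMax_insertMax_of_gt (hi : i ≤ l.length) (hk : i < k) :
    IsRLMax (insertMax l i) k ↔ IsRLMax l (k - 1) := by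
  simp only [IsRLMax, length_insertMax hi]
  constructor
  · intro hR j hkj hj
    have h := hR (j + 1) (by omega) (by omega)
    rwa [getD_insertMax_of_gt hi (by omega), getD_insertMax_of_gt hi hk,
      Nat.add_sub_cancel] at h
  · intro hR j hkj hj
    rw [getD_insertMax_of_gt hi (by omega), getD_insertMax_of_gt hi hk]
    exact hR (j - 1) (by omega) (by omega)

noncomputable def countRLMaxBelow (l : List ℕ) (i : ℕ) : ℕ :=
  ((Finset.range i).filter (IsRLMax l)).card

lemma shortCount_eq_card (l : List ℕ) :
    shortCount l = ((Finset.range l.length).filter fun k => ¬ IsRLMax l k).card := by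
  rw [shortCount, ← Set.ncard_coe_finset]
  congr 1
  ext k
  simp

lemma shortCount_add_countRLMaxBelow_length (l : List ℕ) :
    shortCount l + countRLMaxBelow l l.length = l.length := by
  rw [shortCount_eq_card, countRLMaxBelow, add_comm, Finset.card_filter_add_card_filter_not,
    Finset.card_range]

lemma shortCount_insertMax (hle : ∀ x ∈ l, x ≤ l.length) (hi : i ≤ l.length) :
    shortCount (insertMax l i) = shortCount l + countRLMaxBelow l i := by
  obtain ⟨m, hm⟩ : ∃ m, l.length = i + m := ⟨l.length - i, by omega⟩
  have hL : (insertMax l i).length = i + (m + 1) := by rw [length_insertMax hi]; omega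
  have hbefore : ∀ k ∈ Finset.range i, (if ¬ IsRLMax (insertMax l i) k then 1 else 0)
      = (if ¬ IsRLMax l k then 1 else 0) + (if IsRLMax l k then 1 else 0) := by
    intro k hk
    rw [if_pos (not_isRLMax_insertMax_of_lt hle hi (Finset.mem_range.mp hk))]
    split_ifs <;> rfl
  have hafter : ∀ k ∈ Finset.range m,
      (if ¬ IsRLMax (insertMax l i) (i + (k + 1)) then 1 else 0)
        = (if ¬ IsRLMax l (i + k) then 1 else 0) := by
    intro k _
    rw [isRLMax_insertMax_of_gt hi (by omega), show i + (k + 1) - 1 = i + k by omega]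
  simp only [shortCount_eq_card, countRLMaxBelow, Finset.card_filter, hL, hm,
    Finset.sum_range_add, Finset.sum_range_succ', Finset.sum_congr rfl hbefore,
    Finset.sum_congr rfl hafter, Finset.sum_add_distrib, add_zero,
    isRLMax_insertMax_self hle hi, not_true_eq_false, if_false]
  ring

lemma countRLMaxBelow_mono (l : List ℕ) : Monotone (countRLMaxBelow l) := fun _ _ hij =>
  Finset.card_le_card (Finset.filter_subset_filter _ (Finset.range_subset_range.mpr hij))

lemma countRLMaxBelow_lt_of_le (hik : i ≤ k) (hk : IsRLMax l k) :
    countRLMaxBelow l i < countRLMaxBelow l (k + 1) := by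
  refine Finset.card_lt_card ⟨Finset.filter_subset_filter _
    (Finset.range_subset_range.mpr (by omega)), fun hsub => ?_⟩
  have hk' := hsub (Finset.mem_filter.mpr ⟨Finset.self_mem_range_succ k, hk⟩)
  have := Finset.mem_range.mp (Finset.mem_filter.mp hk').1
  omega

end rightToLeftMaxima

namespace IsPermList

variable {n : ℕ} {l : List ℕ}

lemma length_eq (h : IsPermList n l) : l.length = n := by
  simpa using List.Perm.length_eq h

lemma nodup (h : IsPermList n l) : l.Nodup :=
  h.nodup_iff.mpr (List.nodup_range' 1 (by omega))

lemma le_length (h : IsPermList n l) : ∀ x ∈ l, x ≤ l.length := fun x hx => by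
  have := List.mem_range'_1.mp (h.mem_iff.mp hx)
  rw [h.length_eq]
  omega

end IsPermList

lemma isPermList_insertMax {n : ℕ} {l : List ℕ} (h : IsPermList n l) (i : ℕ) :
    IsPermList (n + 1) (insertMax l i) := by
  have hins : (insertMax l i).Perm ((n + 1) :: l) := by
    rw [insertMax, h.length_eq]
    exact List.perm_middle.trans (by rw [List.take_append_drop])
  refine hins.trans ((h.cons _).trans ?_)
  rw [List.range'_concat, show 1 + 1 * n = n + 1 by ring]
  exact (List.perm_append_singleton _ _).symm

section insertMaxCount

variable {l : List ℕ} {i : ℕ}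

lemma shortCount_insertMax_le_length (hle : ∀ x ∈ l, x ≤ l.length) (hi : i ≤ l.length) :
    shortCount (insertMax l i) ≤ l.length := by
  rw [shortCount_insertMax hle hi]
  have := countRLMaxBelow_mono l hi
  have := shortCount_add_countRLMaxBelow_length l
  omega

lemma shortCount_insertMax_lt_of_lt (hnd : l.Nodup) (hle : ∀ x ∈ l, x ≤ l.length)
    (ha : AvoidsPat l [1, 3, 2]) {i' : ℕ} (hii' : i < i') (hi' : i' ≤ l.length)
    (hav : AvoidsPat (insertMax l i') [1, 3, 2]) :
    shortCount (insertMax l i) < shortCount (insertMax l i') := by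
  obtain ⟨k, rfl⟩ : ∃ k, i' = k + 1 := ⟨i' - 1, by omega⟩
  have hk := (avoidsPat_132_insertMax_succ_iff hnd hle ha (by omega)).mp hav
  rw [shortCount_insertMax hle (by omega), shortCount_insertMax hle hi']
  exact Nat.add_lt_add_left (countRLMaxBelow_lt_of_le (by omega) hk) _

lemma eq_of_shortCount_insertMax_eq (hnd : l.Nodup) (hle : ∀ x ∈ l, x ≤ l.length)
    (ha : AvoidsPat l [1, 3, 2]) {i' : ℕ} (hi : i ≤ l.length) (hi' : i' ≤ l.length)
    (hav : AvoidsPat (insertMax l i) [1, 3, 2]) (hav' : AvoidsPat (insertMax l i') [1, 3, 2])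
    (heq : shortCount (insertMax l i) = shortCount (insertMax l i')) : i = i' := by
  rcases lt_trichotomy i i' with hii' | rfl | hii'
  · exact absurd heq (shortCount_insertMax_lt_of_lt hnd hle ha hii' hi' hav').ne
  · rfl
  · exact absurd heq (shortCount_insertMax_lt_of_lt hnd hle ha hii' hi hav).ne'

end insertMaxCount

lemma card_filter_range_succ_of_strictMono {m n : ℕ} {P : ℕ → Prop} [DecidablePred P]
    {p : Fin m → ℕ} (hmono : StrictMono p) (hlt : ∀ j, p j < n)
    (hchar : ∀ i, i < n → (P i ↔ ∃ j, p j = i)) (j : Fin m) :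
    ((Finset.range (p j + 1)).filter P).card = j + 1 := by
  have himg : (Finset.range (p j + 1)).filter P = (Finset.Iic j).map ⟨p, hmono.injective⟩ := by
    ext k
    simp only [Finset.mem_filter, Finset.mem_range, Finset.mem_map, Finset.mem_Iic,
      Function.Embedding.coeFn_mk]
    constructor
    · rintro ⟨hk, hP⟩
      obtain ⟨i, rfl⟩ := (hchar k (by have := hlt j; omega)).mp hP
      exact ⟨i, hmono.le_iff_le.mp (by omega), rfl⟩
    · rintro ⟨i, hij, rfl⟩
      exact ⟨Nat.lt_succ_of_le (hmono.monotone hij), (hchar _ (hlt i)).mpr ⟨i, rfl⟩⟩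
  rw [himg, Finset.card_map, Fin.card_Iic]

/-- Let `π` be a 132-avoiding permutation of length `n` with exactly `r` short values, and
let `p 0 < p 1 < … < p (n-r-1)` be the (0-indexed) positions of its `n - r` right-to-left
maxima.  Inserting the new maximum at the front gives a 132-avoiding permutation of length
`n+1` with exactly `r` short values; inserting it immediately after the `(j+1)`-st
right-to-left maximum gives a 132-avoiding permutation of length `n+1` with exactly
`r + (j+1)` short values.  Consequently, for each `s` with `r ≤ s ≤ n` there is exactly one
insertion position producing (with no removal) an element of `A(n+1, s)`, and no insertion
avoiding 132 produces a short-value count outside `[r, n]`. -/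
theorem insertMax_after_rlmax (n r : ℕ) (π : List ℕ)
    (h : IsPermList n π) (ha : AvoidsPat π [1, 3, 2]) (hr : shortCount π = r)
    (p : Fin (n - r) → ℕ) (hmono : StrictMono p) (hlt : ∀ j, p j < n)
    (hchar : ∀ i, i < n → (IsRLMax π i ↔ ∃ j, p j = i)) :
    (AvoidsPat (insertMax π 0) [1, 3, 2] ∧ IsPermList (n + 1) (insertMax π 0) ∧
      shortCount (insertMax π 0) = r) ∧
    (∀ j : Fin (n - r),
      AvoidsPat (insertMax π (p j + 1)) [1, 3, 2] ∧
        IsPermList (n + 1) (insertMax π (p j + 1)) ∧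
        shortCount (insertMax π (p j + 1)) = r + (j : ℕ) + 1) ∧
    (∀ s, r ≤ s → s ≤ n →
      ∃! i, i ≤ n ∧ AvoidsPat (insertMax π i) [1, 3, 2] ∧
        shortCount (insertMax π i) = s) ∧
    (∀ i, i ≤ n → AvoidsPat (insertMax π i) [1, 3, 2] →
      r ≤ shortCount (insertMax π i) ∧ shortCount (insertMax π i) ≤ n) := by
  have hlen := h.length_eq
  have hle := h.le_length
  have hcount₀ : shortCount (insertMax π 0) = r := by
    simp [shortCount_insertMax hle, countRLMaxBelow, hr]
  have hcount_p (j : Fin (n - r)) : shortCount (insertMax π (p j + 1)) = r + j + 1 := by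
    rw [shortCount_insertMax hle (by have := hlt j; omega), hr, countRLMaxBelow,
      card_filter_range_succ_of_strictMono hmono hlt hchar j, add_assoc]
  have havoid₀ := avoidsPat_132_insertMax_zero hle ha
  have havoid_p (j : Fin (n - r)) : AvoidsPat (insertMax π (p j + 1)) [1, 3, 2] :=
    (avoidsPat_132_insertMax_succ_iff h.nodup hle ha (hlen ▸ hlt j)).mpr
      ((hchar _ (hlt j)).mpr ⟨j, rfl⟩)
  refine ⟨⟨havoid₀, isPermList_insertMax h 0, hcount₀⟩,
    fun j => ⟨havoid_p j, isPermList_insertMax h _, hcount_p j⟩, fun s hrs hsn => ?_,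
    fun i hi _ => ?_⟩
  · obtain ⟨i₀, hi₀, hav₀, rfl⟩ : ∃ i ≤ n, AvoidsPat (insertMax π i) [1, 3, 2] ∧
        shortCount (insertMax π i) = s := by
      rcases hrs.eq_or_lt with rfl | hrs
      · exact ⟨0, n.zero_le, havoid₀, hcount₀⟩
      · refine ⟨_, hlt ⟨s - r - 1, by omega⟩, havoid_p _, ?_⟩
        rw [hcount_p, Fin.val_mk]
        omega
    exact ⟨i₀, ⟨hi₀, hav₀, rfl⟩, fun i ⟨hi, hav, hc⟩ =>
      eq_of_shortCount_insertMax_eq h.nodup hle ha (by omega) (by omega) hav hav₀ hc⟩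
  · have hbound := shortCount_insertMax_le_length hle (i := i) (by omega)
    rw [shortCount_insertMax hle (by omega), hr] at hbound ⊢
    omega
end

section
/- For n ≥ 2 and 0 ≤ r ≤ n−1, the map sending a permutation π' ∈ A(n−1, r) to the permutation of length n obtained by increasing every entry of π' by one and appending the entry 1 at the end is a bijection from A(n−1, r) onto the set of permutations in A(n, r) whose last entry is 1. In particular, the number of 132-avoiding permutations of length n with exactly r short values and last entry equal to 1 is |A(n−1, r)|. -/
open List

attribute [local instance] Classical.propDecidable

/-!
Applying a strictly increasing map to the entries changes no order relation, so it preserves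
pattern containment and right-to-left maxima. Appending a new minimum `1` at the end creates no
`132` (the `1` of the pattern would have to be an earlier, smaller entry), the new last entry is a
right-to-left maximum, and every earlier entry stays one exactly when it was. Conversely, a
permutation ending in `1` is of this form: subtract one from its other entries.
-/

theorem List.getD_map_of_lt {α β : Type*} (f : α → β) {l : List α} {i : ℕ} (h : i < l.length)
    (d : β) (e : α) : (l.map f).getD i d = f (l.getD i e) := by
  rw [getD_eq_getElem _ _ (by simpa using h), getD_eq_getElem _ _ h, getElem_map]

section StrictMono

variable {f : ℕ → ℕ} (hf : StrictMono f)
include hf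

theorem orderIsoList_map_iff (s p : List ℕ) : OrderIsoList (s.map f) p ↔ OrderIsoList s p := by
  unfold OrderIsoList
  refine and_congr (by rw [length_map]) (forall₂_congr fun i j => imp_congr_right fun hij => ?_)
  rw [length_map]
  refine imp_congr_right fun hj => ?_
  rw [getD_map_of_lt f (hij.trans hj) 0 0, getD_map_of_lt f hj 0 0, hf.lt_iff_lt]

theorem containsPat_map_iff (l p : List ℕ) : ContainsPat (l.map f) p ↔ ContainsPat l p := by
  constructor
  · rintro ⟨s, hs, hiso⟩
    obtain ⟨t, ht, rfl⟩ := sublist_map_iff.mp hs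
    exact ⟨t, ht, (orderIsoList_map_iff hf t p).mp hiso⟩
  · rintro ⟨t, ht, hiso⟩
    exact ⟨t.map f, ht.map f, (orderIsoList_map_iff hf t p).mpr hiso⟩

theorem isRLMax_map_iff (l : List ℕ) (i : ℕ) : IsRLMax (l.map f) i ↔ IsRLMax l i := by
  unfold IsRLMax
  rw [length_map]
  refine forall₃_congr fun j hij hj => ?_
  rw [getD_map_of_lt f (hij.trans hj) 0 0, getD_map_of_lt f hj 0 0, hf.lt_iff_lt]

theorem shortCount_map (l : List ℕ) : shortCount (l.map f) = shortCount l := by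
  simp only [shortCount, length_map, isRLMax_map_iff hf]

end StrictMono

theorem containsPat_132_append_singleton_iff {m : List ℕ} {a : ℕ} (ha : ∀ x ∈ m, a ≤ x) :
    ContainsPat (m ++ [a]) [1, 3, 2] ↔ ContainsPat m [1, 3, 2] := by
  refine ⟨?_, fun ⟨s, hs, hiso⟩ => ⟨s, hs.trans (sublist_append_left m [a]), hiso⟩⟩
  rintro ⟨s, hs, hiso⟩
  obtain ⟨s₁, s₂, rfl, hs₁, hs₂⟩ := sublist_append_iff.mp hs
  rcases sublist_singleton.mp hs₂ with rfl | rfl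
  · exact ⟨s₁, by simpa using hs₁, by simpa using hiso⟩
  · -- an occurrence `b c a` of `132` ending at `a` would need `b < a`
    obtain ⟨b, c, rfl⟩ : ∃ b c, s₁ = [b, c] :=
      length_eq_two.mp (by simpa using hiso.1)
    have hba : b < a := by simpa using (hiso.2 0 2 (by norm_num) (by simp)).mpr (by simp)
    exact absurd (ha b (hs₁.subset (by simp))) (not_le.mpr hba)

theorem isRLMax_append_singleton_iff {m : List ℕ} {a : ℕ} (ha : ∀ x ∈ m, a < x) {i : ℕ}
    (hi : i < m.length) : IsRLMax (m ++ [a]) i ↔ IsRLMax m i := by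
  unfold IsRLMax
  simp only [length_append, length_singleton, getD_append _ _ _ _ hi]
  refine ⟨fun h j hij hj => ?_, fun h j hij hj => ?_⟩
  · simpa only [getD_append _ _ _ _ hj] using h j hij (by omega)
  · rcases Nat.lt_succ_iff_lt_or_eq.mp hj with hj | rfl
    · simpa only [getD_append _ _ _ _ hj] using h j hij hj
    · rw [getD_append_right _ _ _ _ le_rfl, Nat.sub_self, getD_cons_zero,
        getD_eq_getElem _ _ hi]
      exact ha _ (getElem_mem hi)

theorem isRLMax_append_singleton_length (m : List ℕ) (a : ℕ) : IsRLMax (m ++ [a]) m.length :=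
  fun j hij hj => absurd hj (by simpa using hij)

theorem shortCount_append_singleton {m : List ℕ} {a : ℕ} (ha : ∀ x ∈ m, a < x) :
    shortCount (m ++ [a]) = shortCount m := by
  unfold shortCount
  congr 1
  ext i
  simp only [Set.mem_ofPred_eq, length_append, length_singleton]
  rcases lt_trichotomy i m.length with hi | rfl | hi
  · rw [isRLMax_append_singleton_iff ha hi]
    exact and_congr_left fun _ => iff_of_true (by omega) hi
  · simp [isRLMax_append_singleton_length]
  · exact iff_of_false (by omega) (by omega)

theorem IsPermList.pos_of_mem {n : ℕ} {l : List ℕ} (hl : IsPermList n l) {x : ℕ} (hx : x ∈ l) :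
    0 < x :=
  (mem_range'_1.mp (hl.subset hx)).1

theorem isPermList_map_add_one_append_one_iff {n : ℕ} {l : List ℕ} :
    IsPermList (n + 1) (l.map (· + 1) ++ [1]) ↔ IsPermList n l := by
  have hrange : range' 2 n = (range' 1 n).map (· + 1) := by
    simpa only [add_comm 1] using (map_add_range' (a := 1) 1 n 1).symm
  unfold IsPermList
  rw [(perm_append_singleton 1 _).congr_left, range'_succ, perm_cons, hrange,
    map_perm_map_iff (add_left_injective 1)]

theorem map_add_one_append_one_mem_A132_iff {n r : ℕ} {l : List ℕ} :
    l.map (· + 1) ++ [1] ∈ A132 (n + 1) r ↔ l ∈ A132 n r := by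
  simp only [A132, Set.mem_ofPred_eq, isPermList_map_add_one_append_one_iff]
  refine and_congr_right fun hl => ?_
  have hgt : ∀ x ∈ l.map (· + 1), 1 < x := by
    simpa using fun x hx => hl.pos_of_mem hx
  have hsucc : StrictMono (· + 1 : ℕ → ℕ) := strictMono_id.add_const 1
  rw [AvoidsPat, AvoidsPat, containsPat_132_append_singleton_iff (fun x hx => (hgt x hx).le),
    containsPat_map_iff hsucc, shortCount_append_singleton hgt, shortCount_map hsucc]

theorem map_add_one_append_one_injective :
    Function.Injective fun l : List ℕ => l.map (· + 1) ++ [1] :=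
  fun (_ _ : List ℕ) h => map_injective_iff.mpr (add_left_injective 1) (append_cancel_right h)

theorem IsPermList.exists_map_add_one_append_one {n : ℕ} {m : List ℕ} (hm : IsPermList n m)
    (hlast : m.getLast? = some 1) : ∃ l : List ℕ, l.map (· + 1) ++ [1] = m := by
  obtain ⟨m', rfl⟩ := getLast?_eq_some_iff.mp hlast
  refine ⟨m'.map (· - 1), congrArg (· ++ [1]) ?_⟩
  conv_rhs => rw [← map_id m']
  rw [map_map]
  exact map_inj_left.mpr fun x hx => Nat.sub_add_cancel (hm.pos_of_mem (mem_append_left _ hx))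

theorem bijOn_append_one_general (n r : ℕ) (hn : 2 ≤ n) :
    Set.BijOn (fun l : List ℕ => (l.map (· + 1)) ++ [1]) (A132 (n - 1) r)
      {l | l ∈ A132 n r ∧ l.getLast? = some 1} ∧
    {l | l ∈ A132 n r ∧ l.getLast? = some 1}.ncard = (A132 (n - 1) r).ncard := by
  obtain ⟨k, rfl⟩ : ∃ k, n = k + 1 := ⟨n - 1, by omega⟩
  rw [Nat.add_sub_cancel]
  have hbij : Set.BijOn (fun l : List ℕ => (l.map (· + 1)) ++ [1]) (A132 k r)
      {l | l ∈ A132 (k + 1) r ∧ l.getLast? = some 1} := by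
    refine ⟨fun l hl => ⟨map_add_one_append_one_mem_A132_iff.mpr hl, getLast?_concat⟩,
      map_add_one_append_one_injective.injOn, ?_⟩
    rintro m ⟨hm, hlast⟩
    obtain ⟨l, rfl⟩ := hm.1.exists_map_add_one_append_one hlast
    exact ⟨l, map_add_one_append_one_mem_A132_iff.mp hm, rfl⟩
  exact ⟨hbij, by rw [← hbij.image_eq, hbij.injOn.ncard_image]⟩

/-- For `n ≥ 2` and `0 ≤ r ≤ n-1`, the map sending `π' ∈ A(n-1, r)` to the permutation
obtained by increasing every entry by one and appending the entry `1` at the end is a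
bijection onto the set of permutations in `A(n, r)` whose last entry is `1`; in particular
that set has cardinality `|A(n-1, r)|`. -/
theorem bijOn_append_one (n r : ℕ) (hn : 2 ≤ n) (hr : r ≤ n - 1) :
    Set.BijOn (fun l : List ℕ => (l.map (· + 1)) ++ [1]) (A132 (n - 1) r)
      {l | l ∈ A132 n r ∧ l.getLast? = some 1} ∧
    {l | l ∈ A132 n r ∧ l.getLast? = some 1}.ncard = (A132 (n - 1) r).ncard :=
  bijOn_append_one_general n r hn
end
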